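/- Let (F_n) be a sequence of cdfs of Borel probability measures on ℝ satisfying: (1) 0 < F_n(0) → 0 as n → ∞; (2) μ_n := E_{F_n}[X] ≥ μ for a fixed constant μ > 0; (3) there exist constants C, K, M < ∞ such that for every n, E_{F_n}[X²] ≤ C, E_{F_n}[X² | X ≤ 0] ≤ K, and F_n(x+t) − F_n(x) ≤ M·t for all x ≥ 0, t > 0. Define G_n(y) = ∫_{(-∞,y]}(x² − yx) dF_n(x) and let y_n* ≥ 0 be a zero of G_n (G_n(y_n*) = 0). Then F_n(y_n*) ≤ F_n(0) + Θ^{1/3}·F_n(0)^{1/3}, where Θ = 27·(K + C√K/μ)·M²; in particular F_n(y_n*) = O(F_n(0)^{1/3}) → 0 as n → ∞. -/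

import Mathlib

/-!
On `(-∞, 0]` the integrand `x² - yx` of `G(y)` is nonnegative, on `(0, y]` it is `-x(y - x) ≤ 0`, so
`G(y) = 0` says that `∫_{(0,y]} x(y - x)` equals `∫_{(-∞,0]} (x² - yx)`. The latter is at most
`(K + C√K/m) F(0)`, by Cauchy–Schwarz on `(-∞, 0]` and the bound `y ≤ C/m`, which follows from
`y E[X] ≤ E[X²]`. On the other hand, if `p` is the mass of `(0, y]`, the concentration bound
leaves mass at least `p/3` on `(δ, y - δ]` with `δ = p/(3M)`, where `x(y - x) ≥ δ²`; hence
`p³/(27M²) ≤ (K + C√K/m) F(0)`.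
-/

open MeasureTheory Set Filter

theorem sq_integral_le_measureReal_univ_mul_integral_sq {α : Type*} [MeasurableSpace α]
    {μ : Measure α} [IsFiniteMeasure μ] {f : α → ℝ} (hf : Integrable f μ)
    (hf2 : Integrable (fun x => f x ^ 2) μ) :
    (∫ x, f x ∂μ) ^ 2 ≤ μ.real univ * ∫ x, f x ^ 2 ∂μ := by
  set N := ∫ x, f x ∂μ
  set F := μ.real univ
  rcases measureReal_nonneg.eq_or_lt with hF | hF
  · have : μ = 0 := Measure.measure_univ_eq_zero.1 ((measureReal_eq_zero_iff).1 hF.symm)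
    simp [N, this]
  have hexp : ∫ x, (F * f x - N) ^ 2 ∂μ = F * (F * ∫ x, f x ^ 2 ∂μ - N ^ 2) := by
    have hlin : Integrable (fun x => F ^ 2 * f x ^ 2 - 2 * F * N * f x) μ :=
      (hf2.const_mul _).sub (hf.const_mul _)
    simp_rw [show ∀ x, (F * f x - N) ^ 2 = F ^ 2 * f x ^ 2 - 2 * F * N * f x + N ^ 2 from
      fun x => by ring]
    rw [integral_add hlin (integrable_const _), integral_sub (hf2.const_mul _) (hf.const_mul _),
      integral_const_mul, integral_const_mul, integral_const, smul_eq_mul]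
    ring
  have hnonneg : 0 ≤ ∫ x, (F * f x - N) ^ 2 ∂μ := integral_nonneg fun x => sq_nonneg _
  rw [hexp] at hnonneg
  linarith [(mul_nonneg_iff_of_pos_left hF).1 hnonneg]

theorem setIntegral_le_sqrt_mul_measureReal {α : Type*} [MeasurableSpace α] {μ : Measure α}
    [IsFiniteMeasure μ] {f : α → ℝ} {s : Set α} {K : ℝ} (hf : IntegrableOn f s μ)
    (hf2 : IntegrableOn (fun x => f x ^ 2) s μ) (hK : ∫ x in s, f x ^ 2 ∂μ ≤ K * μ.real s) :
    ∫ x in s, f x ∂μ ≤ √K * μ.real s := by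
  have hcs := sq_integral_le_measureReal_univ_mul_integral_sq hf hf2
  rw [measureReal_restrict_apply_univ] at hcs
  have hsq : (∫ x in s, f x ∂μ) ^ 2 ≤ K * μ.real s ^ 2 := by
    nlinarith [measureReal_nonneg (μ := μ) (s := s)]
  calc ∫ x in s, f x ∂μ ≤ √(K * μ.real s ^ 2) := (le_abs_self _).trans (Real.abs_le_sqrt hsq)
    _ = √K * μ.real s := by rw [Real.sqrt_mul' _ (sq_nonneg _), Real.sqrt_sq measureReal_nonneg]

theorem mul_integral_id_le_integral_sq {ν : Measure ℝ} {y : ℝ} (hy : 0 ≤ y)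
    (h1 : Integrable (fun x : ℝ => x) ν) (h2 : Integrable (fun x : ℝ => x ^ 2) ν)
    (hzero : ∫ x in Iic y, (x ^ 2 - y * x) ∂ν = 0) :
    y * ∫ x, x ∂ν ≤ ∫ x, x ^ 2 ∂ν := by
  have htail : 0 ≤ ∫ x in Ioi y, (x ^ 2 - y * x) ∂ν :=
    setIntegral_nonneg measurableSet_Ioi fun x (hx : y < x) => by nlinarith
  have hsplit := integral_add_compl (f := fun x => x ^ 2 - y * x) (s := Iic y) measurableSet_Iic
    (h2.sub (h1.const_mul y))
  rw [compl_Iic, hzero, zero_add, integral_sub h2 (h1.const_mul y), integral_const_mul]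
    at hsplit
  linarith

theorem measureReal_Ioc_eq_sub {ν : Measure ℝ} [IsFiniteMeasure ν] {a b : ℝ} (hab : a ≤ b) :
    ν.real (Ioc a b) = ν.real (Iic b) - ν.real (Iic a) := by
  rw [← Iic_sdiff_Iic, measureReal_sdiff (Iic_subset_Iic.2 hab) measurableSet_Iic]

theorem measureReal_Ioc_zero_pow_three_le {ν : Measure ℝ} [IsFiniteMeasure ν] {M y : ℝ}
    (hconc : ∀ x t : ℝ, 0 ≤ x → 0 < t → ν.real (Iic (x + t)) - ν.real (Iic x) ≤ M * t) :
    ν.real (Ioc 0 y) ^ 3 ≤ 27 * M ^ 2 * ∫ x in Ioc 0 y, (y * x - x ^ 2) ∂ν := by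
  set p := ν.real (Ioc 0 y)
  have hint : ∀ a b : ℝ, IntegrableOn (fun x => y * x - x ^ 2) (Ioc a b) ν := fun a b =>
    (by fun_prop : Continuous fun x : ℝ => y * x - x ^ 2).integrableOn_Icc.mono_set
      Ioc_subset_Icc_self
  have hB : 0 ≤ ∫ x in Ioc 0 y, (y * x - x ^ 2) ∂ν :=
    setIntegral_nonneg measurableSet_Ioc fun x hx => by nlinarith [hx.1, hx.2]
  rcases (measureReal_nonneg : 0 ≤ p).eq_or_lt with hp | hp
  · simpa [p, ← hp] using mul_nonneg (by positivity : (0 : ℝ) ≤ 27 * M ^ 2) hB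
  have hy : 0 < y := by
    by_contra! hy
    simp [Ioc_eq_empty_of_le hy] at hp
  have hpy : p ≤ M * y := by
    simpa [p, measureReal_Ioc_eq_sub hy.le] using hconc 0 y le_rfl hy
  have hM : 0 < M := pos_of_mul_pos_left (hp.trans_le hpy) hy.le
  set δ := p / (3 * M)
  have hδ : 0 < δ := by positivity
  have hpδ : p = 3 * M * δ := by simp only [δ]; field_simp
  have hδy : 3 * δ ≤ y := by nlinarith
  have hmid : p - 2 * (M * δ) ≤ ν.real (Ioc δ (y - δ)) := by
    have hleft := hconc 0 δ le_rfl hδ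
    have hright := hconc (y - δ) δ (by linarith) hδ
    rw [zero_add] at hleft
    rw [sub_add_cancel] at hright
    have hp_eq : p = ν.real (Iic y) - ν.real (Iic 0) := measureReal_Ioc_eq_sub hy.le
    rw [measureReal_Ioc_eq_sub (by linarith)]
    linarith
  have hlow : δ ^ 2 * ν.real (Ioc δ (y - δ)) ≤ ∫ x in Ioc 0 y, (y * x - x ^ 2) ∂ν := by
    calc δ ^ 2 * ν.real (Ioc δ (y - δ))
        ≤ ∫ x in Ioc δ (y - δ), (y * x - x ^ 2) ∂ν := by
          rw [mul_comm, ← smul_eq_mul]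
          refine setIntegral_ge_of_const_le measurableSet_Ioc (measure_ne_top _ _)
            (fun x hx => ?_) (hint _ _)
          nlinarith [hx.1, hx.2]
      _ ≤ ∫ x in Ioc 0 y, (y * x - x ^ 2) ∂ν := by
          refine setIntegral_mono_set (hint 0 y) ?_
            (Ioc_subset_Ioc hδ.le (by linarith)).eventuallyLE
          filter_upwards [ae_restrict_mem measurableSet_Ioc] with x hx
          exact (by nlinarith [hx.1, hx.2] : (0 : ℝ) ≤ y * x - x ^ 2)
  calc p ^ 3 = 27 * M ^ 2 * (δ ^ 2 * (p - 2 * (M * δ))) := by rw [hpδ]; ring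
    _ ≤ 27 * M ^ 2 * ∫ x in Ioc 0 y, (y * x - x ^ 2) ∂ν := by
      gcongr
      exact (mul_le_mul_of_nonneg_left hmid (sq_nonneg δ)).trans hlow

theorem le_rpow_mul_rpow_of_pow_three_le {p Θ F : ℝ} (hp : 0 ≤ p) (hF : 0 ≤ F)
    (h : p ^ 3 ≤ Θ * F) : p ≤ Θ ^ ((1 : ℝ) / 3) * F ^ ((1 : ℝ) / 3) := by
  rcases hF.eq_or_lt with rfl | hF
  · rw [Real.zero_rpow (by norm_num), mul_zero]
    by_contra! hp
    linarith [pow_pos hp 3]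
  have hΘ : 0 ≤ Θ := (mul_nonneg_iff_of_pos_right hF).1 ((pow_nonneg hp 3).trans h)
  calc p = (p ^ 3) ^ ((1 : ℝ) / 3) := by
        rw [← Real.rpow_natCast, ← Real.rpow_mul hp]; norm_num
    _ ≤ (Θ * F) ^ ((1 : ℝ) / 3) := Real.rpow_le_rpow (by positivity) h (by norm_num)
    _ = Θ ^ ((1 : ℝ) / 3) * F ^ ((1 : ℝ) / 3) := Real.mul_rpow hΘ hF.le

theorem measureReal_Iic_le_of_setIntegral_eq_zero {ν : Measure ℝ} [IsFiniteMeasure ν]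
    {m C K M y : ℝ} (h1 : Integrable (fun x : ℝ => x) ν) (h2 : Integrable (fun x : ℝ => x ^ 2) ν)
    (hm : 0 < m) (hmean : m ≤ ∫ x, x ∂ν) (hC : ∫ x, x ^ 2 ∂ν ≤ C)
    (hK : ∫ x in Iic 0, x ^ 2 ∂ν ≤ K * ν.real (Iic 0))
    (hconc : ∀ x t : ℝ, 0 ≤ x → 0 < t → ν.real (Iic (x + t)) - ν.real (Iic x) ≤ M * t)
    (hy : 0 ≤ y) (hzero : ∫ x in Iic y, (x ^ 2 - y * x) ∂ν = 0) :
    ν.real (Iic y) ≤ ν.real (Iic 0) +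
      (27 * (K + C * √K / m) * M ^ 2) ^ ((1 : ℝ) / 3) * ν.real (Iic 0) ^ ((1 : ℝ) / 3) := by
  set F₀ := ν.real (Iic 0)
  have hC0 : 0 ≤ C := (integral_nonneg fun x => sq_nonneg x).trans hC
  have hyC : y ≤ C / m := by
    rw [le_div_iff₀ hm]
    nlinarith [mul_integral_id_le_integral_sq hy h1 h2 hzero]
  have hneg : ∫ x in Iic 0, -x ∂ν ≤ √K * F₀ :=
    setIntegral_le_sqrt_mul_measureReal h1.neg.integrableOn
      (by simpa only [neg_sq] using h2.integrableOn)
      (by simpa only [neg_sq] using hK)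
  have hneg_nonneg : 0 ≤ ∫ x in Iic (0 : ℝ), -x ∂ν :=
    setIntegral_nonneg measurableSet_Iic fun x hx => neg_nonneg.2 hx
  have hbalance : ∫ x in Ioc 0 y, (y * x - x ^ 2) ∂ν
      = ∫ x in Iic 0, x ^ 2 ∂ν + y * ∫ x in Iic 0, -x ∂ν := by
    have hf : Integrable (fun x : ℝ => x ^ 2 - y * x) ν := h2.sub (h1.const_mul y)
    rw [← Iic_union_Ioc_eq_Iic hy, setIntegral_union (Iic_disjoint_Ioc le_rfl) measurableSet_Ioc
      hf.integrableOn hf.integrableOn] at hzero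
    have hIic : ∫ x in Iic 0, (x ^ 2 - y * x) ∂ν
        = ∫ x in Iic 0, x ^ 2 ∂ν + y * ∫ x in Iic 0, -x ∂ν := by
      rw [integral_sub h2.integrableOn (h1.const_mul y).integrableOn, integral_const_mul,
        integral_neg]
      ring
    have hIoc : ∫ x in Ioc 0 y, (y * x - x ^ 2) ∂ν = -∫ x in Ioc 0 y, (x ^ 2 - y * x) ∂ν := by
      rw [← integral_neg]; congr 1; ext x; ring
    linarith
  have hcube : ν.real (Ioc 0 y) ^ 3 ≤ 27 * (K + C * √K / m) * M ^ 2 * F₀ :=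
    calc ν.real (Ioc 0 y) ^ 3 ≤ 27 * M ^ 2 * ∫ x in Ioc 0 y, (y * x - x ^ 2) ∂ν :=
          measureReal_Ioc_zero_pow_three_le hconc
      _ ≤ 27 * M ^ 2 * (K * F₀ + C / m * (√K * F₀)) := by
          rw [hbalance]
          gcongr
      _ = 27 * (K + C * √K / m) * M ^ 2 * F₀ := by ring
  rw [← sub_add_cancel (ν.real (Iic y)) F₀, ← measureReal_Ioc_eq_sub hy, add_comm]
  gcongr
  exact le_rpow_mul_rpow_of_pow_three_le measureReal_nonneg measureReal_nonneg hcube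

theorem active_ratio_continuity_at_zero_general
    (μ : ℕ → Measure ℝ) (hprob : ∀ n, IsProbabilityMeasure (μ n))
    (F : ℕ → ℝ → ℝ) (hF : ∀ n y, F n y = (μ n (Set.Iic y)).toReal)
    -- (1) vanishing mass on (−∞, 0]
    (hF0 : Tendsto (fun n => F n 0) atTop (nhds 0))
    -- (2) uniformly positive mean
    (hmom1 : ∀ n, Integrable (fun x : ℝ => x) (μ n))
    (m : ℝ) (hm : 0 < m) (hmean : ∀ n, m ≤ ∫ x, x ∂μ n)
    -- (3) uniform second moment, conditional negative-tail second moment,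
    --     and concentration bounds
    (hmom2 : ∀ n, Integrable (fun x : ℝ => x ^ 2) (μ n))
    (C : ℝ) (hC : ∀ n, ∫ x, x ^ 2 ∂μ n ≤ C)
    (K : ℝ) (hK : ∀ n, ∫ x in Set.Iic 0, x ^ 2 ∂μ n ≤ K * F n 0)
    (M : ℝ) (hconc : ∀ n, ∀ x t : ℝ, 0 ≤ x → 0 < t → F n (x + t) - F n x ≤ M * t)
    -- y_n* is a zero of G_n
    (G : ℕ → ℝ → ℝ)
    (hG : ∀ n y, G n y = ∫ x in Set.Iic y, (x ^ 2 - y * x) ∂μ n)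
    (ystar : ℕ → ℝ) (hy0 : ∀ n, 0 ≤ ystar n) (hyzero : ∀ n, G n (ystar n) = 0) :
    (∀ n, F n (ystar n)
        ≤ F n 0 + (27 * (K + C * Real.sqrt K / m) * M ^ 2) ^ ((1 : ℝ) / 3)
            * (F n 0) ^ ((1 : ℝ) / 3))
    ∧ Tendsto (fun n => F n (ystar n)) atTop (nhds 0) := by
  obtain rfl : F = fun n y => (μ n).real (Iic y) := funext fun n => funext (hF n)
  obtain rfl : G = fun n y => ∫ x in Iic y, (x ^ 2 - y * x) ∂μ n := funext fun n => funext (hG n)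
  have hbound : ∀ n, (μ n).real (Iic (ystar n)) ≤ (μ n).real (Iic 0) +
      (27 * (K + C * √K / m) * M ^ 2) ^ ((1 : ℝ) / 3) * (μ n).real (Iic 0) ^ ((1 : ℝ) / 3) :=
    fun n => measureReal_Iic_le_of_setIntegral_eq_zero (hmom1 n) (hmom2 n) hm (hmean n) (hC n)
      (hK n) (hconc n) (hy0 n) (hyzero n)
  refine ⟨hbound, tendsto_of_tendsto_of_tendsto_of_le_of_le tendsto_const_nhds ?_
    (fun n => measureReal_nonneg) hbound⟩
  have hrpow := (Real.continuousAt_rpow_const 0 ((1 : ℝ) / 3) (Or.inr (by norm_num))).tendsto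
  simpa [Real.zero_rpow] using hF0.add ((hrpow.comp hF0).const_mul _)

/-- **Theorem: continuity of the limiting active ratio at zero.**
Let `(μ n)` be a sequence of Borel probability measures on `ℝ` with cdfs `F n`,
satisfying: `0 < F_n(0) → 0`; uniformly positive means `E_{F_n}[X] ≥ m > 0`; uniform
second moments `E_{F_n}[X²] ≤ C`; uniform conditional negative-tail second moments
`E_{F_n}[X² | X ≤ 0] ≤ K`; and the concentration bounds `F_n(x+t) − F_n(x) ≤ M·t`
for `x ≥ 0`, `t > 0`.  If `y_n* ≥ 0` is a zero of
`G_n(y) = ∫_{(-∞,y]}(x² − yx) dμ_n`, then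
`F_n(y_n*) ≤ F_n(0) + Θ^{1/3}·F_n(0)^{1/3}` with `Θ = 27(K + C√K/m)M²`; in
particular `F_n(y_n*) → 0` as `n → ∞`. -/
theorem active_ratio_continuity_at_zero
    (μ : ℕ → Measure ℝ) (hprob : ∀ n, IsProbabilityMeasure (μ n))
    (F : ℕ → ℝ → ℝ) (hF : ∀ n y, F n y = (μ n (Set.Iic y)).toReal)
    -- (1) vanishing mass on (−∞, 0]
    (hFpos : ∀ n, 0 < F n 0)
    (hF0 : Tendsto (fun n => F n 0) atTop (nhds 0))
    -- (2) uniformly positive mean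
    (hmom1 : ∀ n, Integrable (fun x : ℝ => x) (μ n))
    (m : ℝ) (hm : 0 < m) (hmean : ∀ n, m ≤ ∫ x, x ∂μ n)
    -- (3) uniform second moment, conditional negative-tail second moment,
    --     and concentration bounds
    (hmom2 : ∀ n, Integrable (fun x : ℝ => x ^ 2) (μ n))
    (C : ℝ) (hC : ∀ n, ∫ x, x ^ 2 ∂μ n ≤ C)
    (K : ℝ) (hK : ∀ n, ∫ x in Set.Iic 0, x ^ 2 ∂μ n ≤ K * F n 0)
    (M : ℝ) (hconc : ∀ n, ∀ x t : ℝ, 0 ≤ x → 0 < t → F n (x + t) - F n x ≤ M * t)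
    -- y_n* is a zero of G_n
    (G : ℕ → ℝ → ℝ)
    (hG : ∀ n y, G n y = ∫ x in Set.Iic y, (x ^ 2 - y * x) ∂μ n)
    (ystar : ℕ → ℝ) (hy0 : ∀ n, 0 ≤ ystar n) (hyzero : ∀ n, G n (ystar n) = 0) :
    (∀ n, F n (ystar n)
        ≤ F n 0 + (27 * (K + C * Real.sqrt K / m) * M ^ 2) ^ ((1 : ℝ) / 3)
            * (F n 0) ^ ((1 : ℝ) / 3))
    ∧ Tendsto (fun n => F n (ystar n)) atTop (nhds 0) :=
  active_ratio_continuity_at_zero_general μ hprob F hF hF0 hmom1 m hm hmean hmom2 C hC K hK M hconc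
    G hG ystar hy0 hyzero
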